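/- Uniform smallness of the nearest error (random design): under assumptions (A1), (A2) and (A4), sup_{x∈[0,1]} min{|ε_i| : 1 ≤ i ≤ n, |X_i − x| ≤ b_n} = o_P(1), where the minimum over an empty index set is interpreted as +∞; i.e. for every δ > 0, P(sup_{x∈[0,1]} min_{i : |X_i−x| ≤ b_n} |ε_i| > δ) → 0 as n → ∞. -/

import Mathlib

open MeasureTheory ProbabilityTheory Filter Topology
open scoped ENNReal

/-!
Cover `[0, 1]` by `⌊1/h⌋ + 1` intervals of length `h = b_n` such that every `t ∈ [0, 1]` is within
`h` of all points of one of them. The supremum then exceeds `δ` only if some cell contains no `X_i`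
with `|ε_i| ≤ δ`. As the pairs `(X_i, ε_i)` are independent, a fixed cell is missed with probability
`∏ (1 - P(X_i ∈ cell) P(|ε_i| ≤ δ)) ≤ (1 - c q h)^n ≤ exp(-c q n h)`, where `c` bounds the density
from below and `q = 1 - F₀(-δ) > 0` bounds `P(|ε_i| ≤ δ)` since `F₀(0) = 1`. The union bound
over the cells gives `(1/h + 1) exp(-c q n h) ≤ 2/n` as soon as `c q n h ≥ 2 log n` and
`n h ≥ log n ≥ 1`, which `(A4)` guarantees for large `n`.
-/

section Independence

variable {Ω ι α β : Type*} {mΩ : MeasurableSpace Ω} {μ : Measure Ω}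
  [MeasurableSpace α] [MeasurableSpace β]

theorem ProbabilityTheory.IndepFun.measure_preimage_prodMk_eq_lintegral [IsFiniteMeasure μ]
    {V : Ω → α} {W : Ω → β} (hVW : IndepFun V W μ) (hV : Measurable V) (hW : Measurable W)
    {S : Set (α × β)} (hS : MeasurableSet S) :
    μ ((fun ω => (V ω, W ω)) ⁻¹' S) = ∫⁻ v, μ (W ⁻¹' (Prod.mk v ⁻¹' S)) ∂μ.map V := by
  rw [← Measure.map_apply (hV.prodMk hW) hS,
    (indepFun_iff_map_prod_eq_prod_map_map hV.aemeasurable hW.aemeasurable).mp hVW,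
    Measure.prod_apply hS]
  exact lintegral_congr fun v => Measure.map_apply hW (measurable_prodMk_left hS)

theorem ProbabilityTheory.iIndepFun.measure_forall_notMem_eq_prod {X : ι → Ω → α}
    (hX : iIndepFun X μ) (hXm : ∀ i, Measurable (X i)) {J : Set α} (hJ : MeasurableSet J)
    (s : Finset ι) :
    μ {ω | ∀ i ∈ s, X i ω ∉ J} = ∏ i ∈ s, (1 - μ (X i ⁻¹' J)) := by
  have := hX.isProbabilityMeasure
  have hset : {ω | ∀ i ∈ s, X i ω ∉ J} = ⋂ i ∈ s, X i ⁻¹' Jᶜ := by ext; simp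
  rw [hset, hX.meas_biInter fun i _ => ⟨Jᶜ, hJ.compl, rfl⟩]
  exact Finset.prod_congr rfl fun i _ => prob_compl_eq_one_sub (hXm i hJ)

theorem lintegral_one_sub_mul_indicator [IsProbabilityMeasure μ] {Z : Ω → β} (hZ : Measurable Z)
    {E : Set β} (hE : MeasurableSet E) {p : ℝ≥0∞} (hp : p ≤ 1) :
    ∫⁻ ω, (1 - p * E.indicator 1 (Z ω)) ∂μ = 1 - p * μ (Z ⁻¹' E) := by
  have hind : ∀ ω, E.indicator 1 (Z ω) = (Z ⁻¹' E).indicator (1 : Ω → ℝ≥0∞) ω := fun ω => by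
    by_cases h : Z ω ∈ E <;> simp [h]
  simp_rw [hind]
  have hmeas : Measurable ((Z ⁻¹' E).indicator (1 : Ω → ℝ≥0∞)) := measurable_one.indicator (hZ hE)
  have hint : ∫⁻ ω, p * (Z ⁻¹' E).indicator 1 ω ∂μ = p * μ (Z ⁻¹' E) := by
    rw [lintegral_const_mul p hmeas, lintegral_indicator_one (hZ hE)]
  have hle : ∀ ω, p * (Z ⁻¹' E).indicator 1 ω ≤ 1 := fun ω => by
    by_cases h : ω ∈ Z ⁻¹' E <;> simp [h, hp]
  rw [lintegral_sub (hmeas.const_mul p) (hint ▸ ENNReal.mul_ne_top (ne_top_of_le_ne_top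
    ENNReal.one_ne_top hp) (measure_ne_top _ _)) (Eventually.of_forall hle), hint,
    lintegral_const, measure_univ, one_mul]

theorem measure_forall_not_and_eq_prod_of_indepFun [IsProbabilityMeasure μ]
    {X : ι → Ω → α} {Z : ι → Ω → β} (hXm : ∀ i, Measurable (X i)) (hZm : ∀ i, Measurable (Z i))
    (hX : iIndepFun X μ) (hZ : iIndepFun Z μ)
    (hZX : IndepFun (fun ω i => Z i ω) (fun ω i => X i ω) μ)
    {J : Set α} (hJ : MeasurableSet J) {E : Set β} (hE : MeasurableSet E) (s : Finset ι) :
    μ {ω | ∀ i ∈ s, ¬(X i ω ∈ J ∧ Z i ω ∈ E)} = ∏ i ∈ s, (1 - μ (X i ⁻¹' J) * μ (Z i ⁻¹' E)) := by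
  classical
  set S : Set ((ι → β) × (ι → α)) := {q | ∀ i ∈ s, ¬(q.2 i ∈ J ∧ q.1 i ∈ E)}
  have hS : MeasurableSet S := by
    simp only [S, Set.ofPred_forall]
    exact .biInter s.countable_toSet fun i _ =>
      (((measurable_pi_apply i).comp measurable_snd hJ).inter
        ((measurable_pi_apply i).comp measurable_fst hE)).compl
  have hslice : ∀ e : ι → β, μ ((fun ω i => X i ω) ⁻¹' (Prod.mk e ⁻¹' S)) =
      ∏ i ∈ s, (1 - μ (X i ⁻¹' J) * E.indicator 1 (e i)) := fun e => by
    have hset : (fun ω i => X i ω) ⁻¹' (Prod.mk e ⁻¹' S) =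
        {ω | ∀ i ∈ s.filter (e · ∈ E), X i ω ∉ J} := by
      ext ω; simp only [S, Set.mem_preimage, Set.mem_ofPred_eq, Finset.mem_filter, and_imp]
      exact forall₂_congr fun i _ => by tauto
    rw [hset, hX.measure_forall_notMem_eq_prod hXm hJ, Finset.prod_filter]
    exact Finset.prod_congr rfl fun i _ => by by_cases he : e i ∈ E <;> simp [he]
  have hfactor_meas : ∀ i, Measurable fun y : β => 1 - μ (X i ⁻¹' J) * E.indicator 1 y :=
    fun i => measurable_const.sub ((measurable_one.indicator hE).const_mul _)
  calc μ {ω | ∀ i ∈ s, ¬(X i ω ∈ J ∧ Z i ω ∈ E)}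
      = μ ((fun ω => ((fun i => Z i ω), (fun i => X i ω))) ⁻¹' S) := rfl
    _ = ∫⁻ e, ∏ i ∈ s, (1 - μ (X i ⁻¹' J) * E.indicator 1 (e i)) ∂μ.map fun ω i => Z i ω := by
      rw [hZX.measure_preimage_prodMk_eq_lintegral (measurable_pi_lambda _ hZm)
        (measurable_pi_lambda _ hXm) hS]
      exact lintegral_congr hslice
    _ = ∫⁻ ω, ∏ i ∈ s, (1 - μ (X i ⁻¹' J) * E.indicator 1 (Z i ω)) ∂μ :=
      lintegral_map
        (Finset.measurable_prod _ fun i _ => (hfactor_meas i).comp (measurable_pi_apply i))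
        (measurable_pi_lambda _ hZm)
    _ = ∏ i ∈ s, ∫⁻ ω, (1 - μ (X i ⁻¹' J) * E.indicator 1 (Z i ω)) ∂μ :=
      lintegral_prod_eq_prod_lintegral_of_indepFun s _ (hZ.comp _ hfactor_meas)
        fun i => (hfactor_meas i).comp (hZm i)
    _ = ∏ i ∈ s, (1 - μ (X i ⁻¹' J) * μ (Z i ⁻¹' E)) :=
      Finset.prod_congr rfl fun i _ => lintegral_one_sub_mul_indicator (hZm i) hE prob_le_one

end Independence

section Grid

variable {Ω : Type*} {h : ℝ}

/-- The `k`-th interval of length `h` in a grid of `[0, 1]`, shifted back inside `[0, 1]` when it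
would stick out on the right. -/
def gridCell (h : ℝ) (k : ℕ) : Set ℝ :=
  Set.Icc (min (k * h) (1 - h)) (min (k * h) (1 - h) + h)

theorem measurableSet_gridCell (h : ℝ) (k : ℕ) : MeasurableSet (gridCell h k) :=
  measurableSet_Icc

theorem gridCell_subset_Icc (h0 : 0 ≤ h) (h1 : h ≤ 1) (k : ℕ) : gridCell h k ⊆ Set.Icc 0 1 :=
  Set.Icc_subset_Icc (le_min (by positivity) (by linarith))
    (by linarith [min_le_right (k * h) (1 - h)])

theorem volume_gridCell (k : ℕ) : volume (gridCell h k) = ENNReal.ofReal h := by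
  rw [gridCell, Real.volume_Icc, add_sub_cancel_left]

theorem exists_gridCell_subset_closedBall (h0 : 0 < h) {t : ℝ} (ht : t ∈ Set.Icc (0 : ℝ) 1) :
    ∃ k ≤ ⌊h⁻¹⌋₊, gridCell h k ⊆ Metric.closedBall t h := by
  obtain ⟨ht0, ht1⟩ := ht
  refine ⟨⌊t / h⌋₊, Nat.floor_le_floor (by rw [inv_eq_one_div]; gcongr), fun x ⟨hx0, hx1⟩ => ?_⟩
  have hkt : ⌊t / h⌋₊ * h ≤ t := (le_div_iff₀ h0).mp (Nat.floor_le (by positivity))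
  have htk : t < (⌊t / h⌋₊ + 1) * h := (div_lt_iff₀ h0).mp (Nat.lt_floor_add_one _)
  have hmin : t - h ≤ min (⌊t / h⌋₊ * h) (1 - h) := le_min (by linarith) (by linarith)
  rw [Metric.mem_closedBall, Real.dist_eq, abs_le]
  constructor <;> linarith [min_le_left (⌊t / h⌋₊ * h) (1 - h)]

noncomputable def maxNearestError (X ε : ℕ → Ω → ℝ) (n : ℕ) (h : ℝ) (ω : Ω) : ℝ≥0∞ :=
  ⨆ t : Set.Icc (0 : ℝ) 1, ⨅ i : {i : ℕ // i < n ∧ |X i ω - t| ≤ h}, ENNReal.ofReal |ε i ω|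

theorem maxNearestError_le_of_forall_gridCell {X ε : ℕ → Ω → ℝ} {n : ℕ} {δ : ℝ} {ω : Ω}
    (h0 : 0 < h) (hcell : ∀ k ≤ ⌊h⁻¹⌋₊, ∃ i < n, X i ω ∈ gridCell h k ∧ |ε i ω| ≤ δ) :
    maxNearestError X ε n h ω ≤ ENNReal.ofReal δ := by
  refine iSup_le fun t => ?_
  obtain ⟨k, hk, hnear⟩ := exists_gridCell_subset_closedBall h0 t.2
  obtain ⟨i, hi, hXi, hεi⟩ := hcell k hk
  have hdist : |X i ω - t| ≤ h := by simpa [Real.dist_eq] using hnear hXi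
  exact (iInf_le _ ⟨i, hi, hdist⟩).trans (ENNReal.ofReal_le_ofReal hεi)

theorem setOf_lt_maxNearestError_subset_iUnion (X ε : ℕ → Ω → ℝ) (n : ℕ) (δ : ℝ) (h0 : 0 < h) :
    {ω | ENNReal.ofReal δ < maxNearestError X ε n h ω}
      ⊆ ⋃ k ∈ Finset.range (⌊h⁻¹⌋₊ + 1),
          {ω | ∀ i ∈ Finset.range n, ¬(X i ω ∈ gridCell h k ∧ ε i ω ∈ Set.Icc (-δ) δ)} := by
  intro ω (hω : ENNReal.ofReal δ < _)
  by_contra hnot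
  refine not_le.mpr hω (maxNearestError_le_of_forall_gridCell h0 fun k hk => ?_)
  simp only [Set.mem_iUnion, not_exists] at hnot
  obtain ⟨i, hi, hcell⟩ : ∃ i ∈ Finset.range n, X i ω ∈ gridCell h k ∧ ε i ω ∈ Set.Icc (-δ) δ := by
    simpa using hnot k (Finset.mem_range.mpr (Nat.lt_succ_of_le hk))
  exact ⟨i, Finset.mem_range.mp hi, hcell.1, abs_le.mpr hcell.2⟩

end Grid

section Bounds

variable {Ω : Type*} {mΩ : MeasurableSpace Ω} {μ : Measure Ω}

theorem ofReal_mul_volume_le_measure_preimage {X : Ω → ℝ} (hX : Measurable X) {f : ℝ → ℝ}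
    {S : Set ℝ} (hlaw : μ.map X = (volume.restrict S).withDensity fun t => ENNReal.ofReal (f t))
    {c : ℝ} (hf : ∀ t ∈ S, c ≤ f t) {A : Set ℝ} (hA : MeasurableSet A) (hAS : A ⊆ S) :
    ENNReal.ofReal c * volume A ≤ μ (X ⁻¹' A) := by
  rw [← Measure.map_apply hX hA, hlaw, withDensity_apply _ hA, Measure.restrict_restrict hA,
    Set.inter_eq_left.mpr hAS, ← setLIntegral_const]
  exact setLIntegral_mono' hA fun t ht => ENNReal.ofReal_le_ofReal (hf t (hAS ht))

theorem one_sub_measure_le_le_measure_preimage_Icc {Z : Ω → ℝ} (hZ : μ {ω | Z ω ≤ 0} = 1)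
    (δ : ℝ) : 1 - μ {ω | Z ω ≤ -δ} ≤ μ (Z ⁻¹' Set.Icc (-δ) δ) := by
  rw [← hZ]
  refine le_measure_sdiff.trans (measure_mono fun ω ⟨hω0, hωδ⟩ => ?_)
  simp only [Set.mem_ofPred_eq, not_le] at hω0 hωδ
  exact ⟨hωδ.le, by linarith⟩

theorem one_sub_ofReal_le_ofReal_exp_neg {x : ℝ} (hx : 0 ≤ x) :
    1 - ENNReal.ofReal x ≤ ENNReal.ofReal (Real.exp (-x)) := by
  rw [← ENNReal.ofReal_one, ← ENNReal.ofReal_sub _ hx]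
  exact ENNReal.ofReal_le_ofReal (by linarith [Real.add_one_le_exp (-x)])

end Bounds

theorem tendsto_floor_inv_add_one_mul_exp_neg {b : ℕ → ℝ} {κ : ℝ} (hκ : 0 < κ)
    (hb : ∀ n, 0 < b n) (hblog : Tendsto (fun n : ℕ => Real.log n / (n * b n)) atTop (𝓝 0)) :
    Tendsto (fun n : ℕ => ((⌊(b n)⁻¹⌋₊ : ℝ) + 1) * Real.exp (-(κ * (n * b n)))) atTop (𝓝 0) := by
  refine squeeze_zero' (Eventually.of_forall fun n => by positivity) ?_
    (tendsto_const_div_atTop_nhds_zero_nat 2)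
  filter_upwards [hblog.eventually (gt_mem_nhds one_pos),
    hblog.eventually (gt_mem_nhds (half_pos hκ)),
    (Real.tendsto_log_atTop.comp tendsto_natCast_atTop_atTop).eventually_ge_atTop 1,
    eventually_ge_atTop 1] with n hlog hlogκ hlog1 hn1
  have hn : (1 : ℝ) ≤ n := Nat.one_le_cast.mpr hn1
  have hnb : 0 < (n : ℝ) * b n := mul_pos (by linarith) (hb n)
  rw [div_lt_iff₀ hnb] at hlog hlogκ
  have hinv : ((⌊(b n)⁻¹⌋₊ : ℝ) + 1) ≤ 2 * n := by
    have : (b n)⁻¹ ≤ n := by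
      rw [inv_le_iff_one_le_mul₀ (hb n)]; simp only [Function.comp_apply] at hlog1; linarith
    linarith [Nat.floor_le (inv_nonneg.mpr (hb n).le)]
  have hexp : Real.exp (-(κ * (n * b n))) ≤ ((n : ℝ) ^ 2)⁻¹ := by
    rw [← Real.exp_log (by positivity : (0 : ℝ) < n ^ 2), ← Real.exp_neg, Real.log_pow]
    exact Real.exp_le_exp.mpr (by push_cast; nlinarith)
  calc ((⌊(b n)⁻¹⌋₊ : ℝ) + 1) * Real.exp (-(κ * (n * b n))) ≤ 2 * n * ((n : ℝ) ^ 2)⁻¹ :=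
        mul_le_mul hinv hexp (Real.exp_pos _).le (by positivity)
    _ = 2 / n := by field_simp

theorem measure_lt_maxNearestError_le {Ω : Type*} {mΩ : MeasurableSpace Ω} {μ : Measure Ω}
    [IsProbabilityMeasure μ] {X ε : ℕ → Ω → ℝ} (hXm : ∀ i, Measurable (X i))
    (hεm : ∀ i, Measurable (ε i)) (hX : iIndepFun X μ) (hε : iIndepFun ε μ)
    (hεX : IndepFun (fun ω i => ε i ω) (fun ω i => X i ω) μ)
    {n : ℕ} {h δ c q : ℝ} (h0 : 0 < h) (hc : 0 ≤ c) (hq : 0 ≤ q)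
    (hXcell : ∀ i k, ENNReal.ofReal (c * h) ≤ μ (X i ⁻¹' gridCell h k))
    (hεδ : ∀ i, ENNReal.ofReal q ≤ μ (ε i ⁻¹' Set.Icc (-δ) δ)) :
    μ {ω | ENNReal.ofReal δ < maxNearestError X ε n h ω}
      ≤ ENNReal.ofReal ((⌊h⁻¹⌋₊ + 1) * Real.exp (-(c * q * (n * h)))) := by
  have hcell : ∀ k, μ {ω | ∀ i ∈ Finset.range n,
      ¬(X i ω ∈ gridCell h k ∧ ε i ω ∈ Set.Icc (-δ) δ)}
      ≤ ENNReal.ofReal (Real.exp (-(c * q * (n * h)))) := fun k => by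
    rw [measure_forall_not_and_eq_prod_of_indepFun hXm hεm hX hε hεX
      (measurableSet_gridCell h k) measurableSet_Icc]
    calc ∏ i ∈ Finset.range n, (1 - μ (X i ⁻¹' gridCell h k) * μ (ε i ⁻¹' Set.Icc (-δ) δ))
        ≤ ∏ _i ∈ Finset.range n, ENNReal.ofReal (Real.exp (-(c * h * q))) := by
          refine Finset.prod_le_prod' fun i _ => le_trans ?_
            (one_sub_ofReal_le_ofReal_exp_neg (by positivity))
          rw [ENNReal.ofReal_mul (by positivity)]
          exact tsub_le_tsub_left (mul_le_mul' (hXcell i k) (hεδ i)) 1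
      _ = ENNReal.ofReal (Real.exp (-(c * q * (n * h)))) := by
          rw [Finset.prod_const, Finset.card_range, ← ENNReal.ofReal_pow (Real.exp_pos _).le,
            ← Real.exp_nat_mul]
          ring_nf
  calc _ ≤ μ (⋃ k ∈ Finset.range (⌊h⁻¹⌋₊ + 1),
          {ω | ∀ i ∈ Finset.range n, ¬(X i ω ∈ gridCell h k ∧ ε i ω ∈ Set.Icc (-δ) δ)}) :=
        measure_mono (setOf_lt_maxNearestError_subset_iUnion X ε n δ h0)
    _ ≤ ∑ k ∈ Finset.range (⌊h⁻¹⌋₊ + 1), μ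
          {ω | ∀ i ∈ Finset.range n, ¬(X i ω ∈ gridCell h k ∧ ε i ω ∈ Set.Icc (-δ) δ)} :=
        measure_biUnion_finset_le _ _
    _ ≤ ∑ _k ∈ Finset.range (⌊h⁻¹⌋₊ + 1), ENNReal.ofReal (Real.exp (-(c * q * (n * h)))) :=
        Finset.sum_le_sum fun k _ => hcell k
    _ = _ := by
        rw [Finset.sum_const, Finset.card_range, nsmul_eq_mul, ENNReal.ofReal_mul (by positivity),
          ← ENNReal.ofReal_natCast]
        push_cast
        rfl

theorem nearest_error_uniformly_small_random_design_general
    {Ω : Type} [MeasureSpace Ω] [IsProbabilityMeasure (ℙ : Measure Ω)]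
    (X ε : ℕ → Ω → ℝ) (F₀ fX : ℝ → ℝ) (b : ℕ → ℝ)
    -- (A1): model with i.i.d. errors, F₀(0) = 1, F₀(−Δ) < 1 for Δ > 0,
    -- errors independent of covariates
    (hεmeas : ∀ i, Measurable (ε i))
    (hεiid : iIndepFun ε ℙ)
    (hεid : ∀ i, IdentDistrib (ε i) (ε 0) ℙ ℙ)
    (hF₀ : ∀ t, F₀ t = (ℙ {ω | ε 0 ω ≤ t}).toReal)
    (hF₀zero : F₀ 0 = 1)
    (hF₀lt : ∀ d : ℝ, 0 < d → F₀ (-d) < 1)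
    (hindepεX : IndepFun (fun ω i => ε i ω) (fun ω i => X i ω) ℙ)
    -- (A2): covariates i.i.d. with density f_X continuous and bounded away
    -- from zero on its support [0,1]
    (hXmeas : ∀ i, Measurable (X i))
    (hXiid : iIndepFun X ℙ)
    (hXlaw : ∀ i, Measure.map (X i) ℙ =
      (volume.restrict (Set.Icc (0 : ℝ) 1)).withDensity (fun t => ENNReal.ofReal (fX t)))
    (hfXpos : ∃ c > (0 : ℝ), ∀ t ∈ Set.Icc (0 : ℝ) 1, c ≤ fX t)
    -- (A4): b_n > 0, b_n → 0, (log n)/(n b_n) → 0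
    (hbpos : ∀ n, 0 < b n) (hb0 : Tendsto b atTop (𝓝 0))
    (hblog : Tendsto (fun n : ℕ => Real.log n / (n * b n)) atTop (𝓝 0)) :
    ∀ δ : ℝ, 0 < δ →
      Tendsto
        (fun n : ℕ => ℙ {ω : Ω |
          ENNReal.ofReal δ < ⨆ t : Set.Icc (0 : ℝ) 1,
            ⨅ i : {i : ℕ // i < n ∧ |X i ω - (t : ℝ)| ≤ b n},
              ENNReal.ofReal |ε (i : ℕ) ω|})
        atTop (𝓝 0) := by
  intro δ hδ
  obtain ⟨c, hc, hfX⟩ := hfXpos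
  have hq : 0 < 1 - F₀ (-δ) := sub_pos.mpr (hF₀lt δ hδ)
  have hε0 : ℙ {ω | ε 0 ω ≤ 0} = 1 := (ENNReal.toReal_eq_one_iff _).mp (hF₀zero ▸ hF₀ 0).symm
  have hεδ : ∀ i, ENNReal.ofReal (1 - F₀ (-δ)) ≤ ℙ (ε i ⁻¹' Set.Icc (-δ) δ) := fun i => by
    rw [(hεid i).measure_mem_eq measurableSet_Icc, hF₀, ENNReal.ofReal_sub _ ENNReal.toReal_nonneg,
      ENNReal.ofReal_one, ENNReal.ofReal_toReal (measure_ne_top _ _)]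
    exact one_sub_measure_le_le_measure_preimage_Icc hε0 δ
  have hXcell : ∀ h ∈ Set.Ioc (0 : ℝ) 1, ∀ i k,
      ENNReal.ofReal (c * h) ≤ ℙ (X i ⁻¹' gridCell h k) := fun h ⟨h0, h1⟩ i k => by
    rw [ENNReal.ofReal_mul hc.le, ← volume_gridCell (h := h) k]
    exact ofReal_mul_volume_le_measure_preimage (hXmeas i) (hXlaw i) hfX
      (measurableSet_gridCell h k) (gridCell_subset_Icc h0.le h1 k)
  have hbound := fun n (hb1 : b n ≤ 1) => measure_lt_maxNearestError_le (n := n) hXmeas hεmeas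
    hXiid hεiid hindepεX (hbpos n) hc.le hq.le (hXcell _ ⟨hbpos n, hb1⟩) hεδ
  have hlim := ENNReal.tendsto_ofReal
    (tendsto_floor_inv_add_one_mul_exp_neg (mul_pos hc hq) hbpos hblog)
  rw [ENNReal.ofReal_zero] at hlim
  exact tendsto_of_tendsto_of_tendsto_of_le_of_le' tendsto_const_nhds hlim
    (Eventually.of_forall fun _ => zero_le)
    ((hb0.eventually (ge_mem_nhds one_pos)).mono hbound)

/-- **Uniform smallness of the nearest error (random design).**
Under assumptions (A1), (A2) and (A4),
`sup_{x ∈ [0,1]} min{|ε_i| : i ≤ n, |X_i − x| ≤ b_n} = o_P(1)`, the minimum over an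
empty index set being `+∞` (the infimum is taken in `ℝ≥0∞`, so `⨅` over an empty
index type is `⊤`):  for every `δ > 0`,
`P(sup_{x ∈ [0,1]} min_{i : |X_i − x| ≤ b_n} |ε_i| > δ) → 0` as `n → ∞`. -/
theorem nearest_error_uniformly_small_random_design
    {Ω : Type} [MeasureSpace Ω] [IsProbabilityMeasure (ℙ : Measure Ω)]
    (X Y ε : ℕ → Ω → ℝ) (Λ₀ h₀ F₀ fX : ℝ → ℝ) (b : ℕ → ℝ)
    -- Λ₀ is strictly increasing and continuous
    (hΛ₀mono : StrictMono Λ₀) (hΛ₀cont : Continuous Λ₀)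
    -- (A1): model with i.i.d. errors, F₀(0) = 1, F₀(−Δ) < 1 for Δ > 0,
    -- errors independent of covariates
    (hmodel : ∀ i ω, Λ₀ (Y i ω) = h₀ (X i ω) + ε i ω)
    (hεmeas : ∀ i, Measurable (ε i))
    (hεiid : iIndepFun ε ℙ)
    (hεid : ∀ i, IdentDistrib (ε i) (ε 0) ℙ ℙ)
    (hF₀ : ∀ t, F₀ t = (ℙ {ω | ε 0 ω ≤ t}).toReal)
    (hF₀zero : F₀ 0 = 1)
    (hF₀lt : ∀ d : ℝ, 0 < d → F₀ (-d) < 1)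
    (hindepεX : IndepFun (fun ω i => ε i ω) (fun ω i => X i ω) ℙ)
    -- (A2): covariates i.i.d. with density f_X continuous and bounded away
    -- from zero on its support [0,1]
    (hXmeas : ∀ i, Measurable (X i))
    (hXiid : iIndepFun X ℙ)
    (hXlaw : ∀ i, Measure.map (X i) ℙ =
      (volume.restrict (Set.Icc (0 : ℝ) 1)).withDensity (fun t => ENNReal.ofReal (fX t)))
    (hfXcont : ContinuousOn fX (Set.Icc 0 1))
    (hfXpos : ∃ c > (0 : ℝ), ∀ t ∈ Set.Icc (0 : ℝ) 1, c ≤ fX t)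
    -- (A4): b_n > 0, b_n → 0, (log n)/(n b_n) → 0
    (hbpos : ∀ n, 0 < b n) (hb0 : Tendsto b atTop (𝓝 0))
    (hblog : Tendsto (fun n : ℕ => Real.log n / (n * b n)) atTop (𝓝 0)) :
    ∀ δ : ℝ, 0 < δ →
      Tendsto
        (fun n : ℕ => ℙ {ω : Ω |
          ENNReal.ofReal δ < ⨆ t : Set.Icc (0 : ℝ) 1,
            ⨅ i : {i : ℕ // i < n ∧ |X i ω - (t : ℝ)| ≤ b n},
              ENNReal.ofReal |ε (i : ℕ) ω|})
        atTop (𝓝 0) :=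
  nearest_error_uniformly_small_random_design_general X ε F₀ fX b hεmeas hεiid hεid hF₀ hF₀zero
    hF₀lt hindepεX hXmeas hXiid hXlaw hfXpos hbpos hb0 hblog
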